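/- arXiv:1510.03816 — 7 statements merged into one kernel-verified Lean document; each statement's English description precedes it below -/
import Mathlib

section
/- If at step k the update matrix is chosen as M_k = h · (Dφ(u^k))^{-1}, where Dφ(u^k) is an invertible continuous linear map with ‖(Dφ(u^k))^{-1}‖ ≤ C (operator norm) and 0 < h, and if ‖u^k − u‖ < r, then the error satisfies ‖e_{k+1}‖ ≤ (|1 − h| + h·C·B) · ‖e_k‖, where e_k := u^k − u. -/
open scoped RealInnerProductSpace

/-- With the update matrix `M_k = h (Dφ(u^k))⁻¹`, where the inverse Jacobian has operator
norm at most `C`, one step of the feedback iteration satisfies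
`‖e_{k+1}‖ ≤ (|1 − h| + h C B) ‖e_k‖`. -/
theorem feedback_error_contraction_step (d : ℕ) (hd : 1 ≤ d)
    (φ : EuclideanSpace ℝ (Fin d) → EuclideanSpace ℝ (Fin d))
    (Dφ : EuclideanSpace ℝ (Fin d) → (EuclideanSpace ℝ (Fin d) →L[ℝ] EuclideanSpace ℝ (Fin d)))
    (u : EuclideanSpace ℝ (Fin d))
    (M : ℕ → (EuclideanSpace ℝ (Fin d) →L[ℝ] EuclideanSpace ℝ (Fin d)))
    (useq : ℕ → EuclideanSpace ℝ (Fin d))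
    (hrec : ∀ k, useq (k + 1) = useq k + M k (φ u - φ (useq k)))
    (B r C h : ℝ) (hB : 0 ≤ B) (hr : 0 < r) (hh : 0 < h)
    (hTaylor : ∀ v V : EuclideanSpace ℝ (Fin d), ‖v - V‖ < r →
      ‖φ v - φ V - Dφ V (v - V)‖ ≤ B * ‖v - V‖)
    (k : ℕ)
    (Dinv : EuclideanSpace ℝ (Fin d) →L[ℝ] EuclideanSpace ℝ (Fin d))
    (hinv₁ : (Dφ (useq k)).comp Dinv = ContinuousLinearMap.id ℝ (EuclideanSpace ℝ (Fin d)))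
    (hinv₂ : Dinv.comp (Dφ (useq k)) = ContinuousLinearMap.id ℝ (EuclideanSpace ℝ (Fin d)))
    (hC : ‖Dinv‖ ≤ C)
    (hM : M k = h • Dinv)
    (hk : ‖useq k - u‖ < r) :
    ‖useq (k + 1) - u‖ ≤ (|1 - h| + h * C * B) * ‖useq k - u‖ := by
  have hD : ∀ x, Dinv (Dφ (useq k) x) = x := fun x => by
    have := ContinuousLinearMap.ext_iff.mp hinv₂ x
    simpa using this
  set R := φ u - φ (useq k) - Dφ (useq k) (u - useq k) with hR
  have key : useq (k + 1) - u = (1 - h) • (useq k - u) + h • Dinv R := by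
    rw [hrec, hM, hR]
    simp only [map_sub, hD, ContinuousLinearMap.smul_apply]
    module
  have hRnorm : ‖R‖ ≤ B * ‖useq k - u‖ := by
    have h1 := hTaylor u (useq k) (by rwa [norm_sub_rev])
    rw [hR]
    rwa [norm_sub_rev u (useq k)] at h1
  calc ‖useq (k + 1) - u‖ = ‖(1 - h) • (useq k - u) + h • Dinv R‖ := by rw [key]
    _ ≤ ‖(1 - h) • (useq k - u)‖ + ‖h • Dinv R‖ := norm_add_le _ _
    _ = |1 - h| * ‖useq k - u‖ + h * ‖Dinv R‖ := by
        rw [norm_smul, norm_smul, Real.norm_eq_abs, Real.norm_eq_abs, abs_of_pos hh]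
    _ ≤ |1 - h| * ‖useq k - u‖ + h * (C * (B * ‖useq k - u‖)) := by
        gcongr
        calc ‖Dinv R‖ ≤ ‖Dinv‖ * ‖R‖ := Dinv.le_opNorm R
          _ ≤ C * (B * ‖useq k - u‖) := by
            apply mul_le_mul hC hRnorm (norm_nonneg _) (le_trans (norm_nonneg _) hC)
    _ = (|1 - h| + h * C * B) * ‖useq k - u‖ := by ring
end

section
/- (Local convergence of the geodesic shooting algorithm.) Suppose φ satisfies the Taylor bound with constants B ≥ 0 and r > 0, suppose for every k the Jacobian Dφ(u^k) is an invertible continuous linear map with ‖(Dφ(u^k))^{-1}‖ ≤ C, suppose C·B < 1, fix h ∈ (0,1], and run the iteration u^{k+1} = u^k + h (Dφ(u^k))^{-1} (I₁ − φ(u^k)) from an initial guess with ‖u⁰ − u‖ < r. Then with β := |1 − h| + h·C·B < 1 one has ‖u^k − u‖ ≤ β^k ‖u⁰ − u‖ for all k ≥ 0; in particular, for every ε > 0 there exists N such that ‖u^k − u‖ ≤ ε for all k > N. -/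
open scoped RealInnerProductSpace

/-- Local convergence of the geodesic shooting algorithm: under the Taylor bound, with
uniformly bounded inverse Jacobians (`‖(Dφ(u^k))⁻¹‖ ≤ C`, `C·B < 1`), search length
`h ∈ (0,1]`, and an initial guess with `‖u⁰ − u‖ < r`, the errors satisfy
`‖u^k − u‖ ≤ β^k ‖u⁰ − u‖` with `β = |1 − h| + h·C·B < 1`; in particular for every
`ε > 0` there is `N` with `‖u^k − u‖ ≤ ε` for all `k > N`. -/
theorem geodesic_shooting_local_convergence (d : ℕ) (hd : 1 ≤ d)
    (φ : EuclideanSpace ℝ (Fin d) → EuclideanSpace ℝ (Fin d))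
    (Dφ : EuclideanSpace ℝ (Fin d) → (EuclideanSpace ℝ (Fin d) →L[ℝ] EuclideanSpace ℝ (Fin d)))
    (u : EuclideanSpace ℝ (Fin d))
    (useq : ℕ → EuclideanSpace ℝ (Fin d))
    (B r C h : ℝ) (hB : 0 ≤ B) (hr : 0 < r)
    (hTaylor : ∀ v V : EuclideanSpace ℝ (Fin d), ‖v - V‖ < r →
      ‖φ v - φ V - Dφ V (v - V)‖ ≤ B * ‖v - V‖)
    (Dinv : ℕ → (EuclideanSpace ℝ (Fin d) →L[ℝ] EuclideanSpace ℝ (Fin d)))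
    (hinv₁ : ∀ k, (Dφ (useq k)).comp (Dinv k)
      = ContinuousLinearMap.id ℝ (EuclideanSpace ℝ (Fin d)))
    (hinv₂ : ∀ k, (Dinv k).comp (Dφ (useq k))
      = ContinuousLinearMap.id ℝ (EuclideanSpace ℝ (Fin d)))
    (hC : ∀ k, ‖Dinv k‖ ≤ C)
    (hCB : C * B < 1)
    (hh₀ : 0 < h) (hh₁ : h ≤ 1)
    (hrec : ∀ k, useq (k + 1) = useq k + (h • Dinv k) (φ u - φ (useq k)))
    (h₀ : ‖useq 0 - u‖ < r) :
    |1 - h| + h * C * B < 1 ∧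
    (∀ k : ℕ, ‖useq k - u‖ ≤ (|1 - h| + h * C * B) ^ k * ‖useq 0 - u‖) ∧
    (∀ ε > 0, ∃ N : ℕ, ∀ k > N, ‖useq k - u‖ ≤ ε) := by
  set β : ℝ := |1 - h| + h * C * B with hβdef
  have hC0 : 0 ≤ C := le_trans (norm_nonneg _) (hC 0)
  have habs : |1 - h| = 1 - h := abs_of_nonneg (by linarith)
  have hβ1 : β < 1 := by rw [hβdef, habs]; nlinarith
  have hβ0 : 0 ≤ β := by
    rw [hβdef]
    have : 0 ≤ h * C * B := by positivity
    positivity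
  -- one-step contraction
  have key : ∀ k, ‖useq k - u‖ < r → ‖useq (k + 1) - u‖ ≤ β * ‖useq k - u‖ := by
    intro k hk
    set R : EuclideanSpace ℝ (Fin d) := φ u - φ (useq k) - Dφ (useq k) (u - useq k) with hR
    have hRnorm : ‖R‖ ≤ B * ‖useq k - u‖ := by
      have := hTaylor u (useq k) (by rwa [norm_sub_rev])
      rwa [norm_sub_rev u (useq k)] at this
    have hid : Dinv k (Dφ (useq k) (u - useq k)) = u - useq k := by
      have := congrArg (fun f => f (u - useq k)) (hinv₂ k)
      simpa using this
    have hdec : φ u - φ (useq k) = R + Dφ (useq k) (u - useq k) := by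
      rw [hR]; abel
    have heq : useq (k + 1) - u = (1 - h) • (useq k - u) + h • Dinv k R := by
      rw [hrec k, hdec]
      simp only [ContinuousLinearMap.smul_apply, map_add, hid, smul_add]
      module
    rw [heq]
    calc ‖(1 - h) • (useq k - u) + h • Dinv k R‖
        ≤ ‖(1 - h) • (useq k - u)‖ + ‖h • Dinv k R‖ := norm_add_le _ _
      _ = |1 - h| * ‖useq k - u‖ + h * ‖Dinv k R‖ := by
          rw [norm_smul, norm_smul, Real.norm_eq_abs, Real.norm_eq_abs,
            abs_of_pos hh₀]
      _ ≤ |1 - h| * ‖useq k - u‖ + h * (C * (B * ‖useq k - u‖)) := by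
          have h1 : ‖Dinv k R‖ ≤ C * ‖R‖ :=
            le_trans ((Dinv k).le_opNorm R)
              (mul_le_mul_of_nonneg_right (hC k) (norm_nonneg _))
          have h2 : ‖Dinv k R‖ ≤ C * (B * ‖useq k - u‖) :=
            le_trans h1 (mul_le_mul_of_nonneg_left hRnorm hC0)
          nlinarith
      _ = β * ‖useq k - u‖ := by rw [hβdef]; ring
  -- induction
  have main : ∀ k : ℕ, ‖useq k - u‖ ≤ β ^ k * ‖useq 0 - u‖ := by
    intro k
    induction k with
    | zero => simp
    | succ n ih =>
      have hβk : β ^ n ≤ 1 := pow_le_one₀ hβ0 hβ1.le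
      have hn : ‖useq n - u‖ < r := by
        calc ‖useq n - u‖ ≤ β ^ n * ‖useq 0 - u‖ := ih
          _ ≤ 1 * ‖useq 0 - u‖ := mul_le_mul_of_nonneg_right hβk (norm_nonneg _)
          _ = ‖useq 0 - u‖ := one_mul _
          _ < r := h₀
      calc ‖useq (n + 1) - u‖ ≤ β * ‖useq n - u‖ := key n hn
        _ ≤ β * (β ^ n * ‖useq 0 - u‖) := mul_le_mul_of_nonneg_left ih hβ0
        _ = β ^ (n + 1) * ‖useq 0 - u‖ := by ring
  refine ⟨hβ1, main, ?_⟩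
  intro ε hε
  have htend : Filter.Tendsto (fun k : ℕ => β ^ k * ‖useq 0 - u‖)
      Filter.atTop (nhds 0) := by
    simpa using (tendsto_pow_atTop_nhds_zero_of_lt_one hβ0 hβ1).mul_const ‖useq 0 - u‖
  have hev : ∀ᶠ k in Filter.atTop, β ^ k * ‖useq 0 - u‖ ≤ ε :=
    htend.eventually (eventually_le_nhds hε)
  obtain ⟨N, hN⟩ := hev.exists_forall_of_atTop
  exact ⟨N, fun k hk => (main k).trans (hN k hk.le)⟩
end

section
/- The two-dimensional Fourier transform of the conical kernel e^{−‖x‖} is 2π(1 + ‖k‖²)^{−3/2}: for every k ∈ ℝ², ∫_{ℝ²} e^{−‖x‖} e^{−i⟨k,x⟩} dx = 2π (1 + ‖k‖²)^{−3/2}, where the integral is over x ∈ ℝ² with Lebesgue measure and ⟨·,·⟩ is the Euclidean inner product. Equivalently, the Green's function of the Yukawa operator L^{3/2} = (I − Δ)^{3/2} in two dimensions with α = 1 is G_{1/2}(‖x‖) = e^{−‖x‖}/(2π). -/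
/-!
Subordination: by the Cauchy–Schlömilch substitution `t ↦ t - c / t`,
`e^{-r} = (2 / √π) ∫₀^∞ e^{-t²} e^{-r² / (4 t²)} dt`, which writes the conical kernel as a
superposition of Gaussians. Each Gaussian has an explicit Fourier transform, so after Fubini the
transform becomes `(2 / √π) (4π)^{n/2} ∫₀^∞ tⁿ e^{-(1 + ‖k‖²) t²} dt`, a Gamma integral equal to
`(4π)^{n/2} Γ((n + 1) / 2) / √π · (1 + ‖k‖²)^{-(n+1)/2}`; for `n = 2` the constant is `2π`.
-/

open Real MeasureTheory Set Module
open Complex (I ofReal_exp)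
open scoped Complex

section ChangeOfVariables

variable {E : Type*} [NormedAddCommGroup E] [NormedSpace ℝ E] {c : ℝ}

lemma hasDerivAt_const_div (c : ℝ) {t : ℝ} (ht : t ≠ 0) :
    HasDerivAt (fun t : ℝ => c / t) (-(c / t ^ 2)) t := by
  simpa [div_eq_mul_inv, neg_div] using (hasDerivAt_inv ht).const_mul c

lemma image_const_div_Ioi (hc : 0 < c) : (fun t : ℝ => c / t) '' Ioi 0 = Ioi 0 := by
  refine Subset.antisymm (image_subset_iff.2 fun t ht => div_pos hc ht) fun y hy => ?_
  exact ⟨c / y, div_pos hc hy, div_div_cancel₀ hc.ne'⟩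

lemma injOn_const_div_Ioi (hc : 0 < c) : InjOn (fun t : ℝ => c / t) (Ioi 0) :=
  fun s _ t _ h => by simpa [div_eq_mul_inv, hc.ne'] using h

lemma integrableOn_Ioi_div_sq_smul_comp_const_div_iff (hc : 0 < c) (f : ℝ → E) :
    IntegrableOn (fun t => (c / t ^ 2) • f (c / t)) (Ioi 0) ↔ IntegrableOn f (Ioi 0) := by
  conv_rhs => rw [← image_const_div_Ioi hc]
  rw [integrableOn_image_iff_integrableOn_abs_deriv_smul measurableSet_Ioi
    (fun t ht => (hasDerivAt_const_div c (ne_of_gt ht)).hasDerivWithinAt) (injOn_const_div_Ioi hc)]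
  exact integrableOn_congr_fun (fun t (ht : 0 < t) => by rw [abs_neg, abs_of_pos (by positivity)])
    measurableSet_Ioi

lemma integral_Ioi_div_sq_smul_comp_const_div (hc : 0 < c) (f : ℝ → E) :
    ∫ t in Ioi 0, (c / t ^ 2) • f (c / t) = ∫ t in Ioi 0, f t := by
  conv_rhs => rw [← image_const_div_Ioi hc]
  rw [integral_image_eq_integral_abs_deriv_smul measurableSet_Ioi
    (fun t ht => (hasDerivAt_const_div c (ne_of_gt ht)).hasDerivWithinAt) (injOn_const_div_Ioi hc)]
  exact setIntegral_congr_fun measurableSet_Ioi fun t (ht : 0 < t) => by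
    rw [abs_neg, abs_of_pos (by positivity)]

lemma strictMonoOn_sub_const_div (hc : 0 ≤ c) : StrictMonoOn (fun t : ℝ => t - c / t) (Ioi 0) :=
  fun s hs t _ hst => by
    have := div_le_div_of_nonneg_left hc hs hst.le
    simp only; linarith

lemma image_sub_const_div_Ioi (hc : 0 < c) : (fun t : ℝ => t - c / t) '' Ioi 0 = univ := by
  refine eq_univ_of_forall fun w => ?_
  -- the positive root of `t ^ 2 - w * t - c`
  set t := (w + √(w ^ 2 + 4 * c)) / 2
  have hsq : √(w ^ 2 + 4 * c) ^ 2 = w ^ 2 + 4 * c := sq_sqrt (by positivity)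
  have hw : |w| < √(w ^ 2 + 4 * c) := by
    rw [← sqrt_sq_eq_abs]; exact sqrt_lt_sqrt (sq_nonneg w) (by linarith)
  have ht : 0 < t := by have := neg_abs_le w; simp only [t]; linarith
  refine ⟨t, ht, ?_⟩
  field_simp
  simp only [t]
  nlinarith [hsq]

lemma integral_Ioi_one_add_div_sq_smul_comp_sub_const_div (hc : 0 < c) (g : ℝ → E) :
    ∫ t in Ioi 0, (1 + c / t ^ 2) • g (t - c / t) = ∫ u, g u := by
  have hderiv : ∀ t ∈ Ioi (0 : ℝ),
      HasDerivWithinAt (fun t : ℝ => t - c / t) (1 + c / t ^ 2) (Ioi 0) t := fun t ht =>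
    (((hasDerivAt_id t).sub (hasDerivAt_const_div c (ne_of_gt ht))).congr_deriv
      (sub_neg_eq_add _ _)).hasDerivWithinAt
  conv_rhs => rw [← setIntegral_univ, ← image_sub_const_div_Ioi hc]
  rw [integral_image_eq_integral_abs_deriv_smul measurableSet_Ioi hderiv
    (strictMonoOn_sub_const_div hc.le).injOn]
  exact setIntegral_congr_fun measurableSet_Ioi fun t (ht : 0 < t) => by
    rw [abs_of_pos (by positivity)]

end ChangeOfVariables

section Subordination

variable {c : ℝ}

lemma integrableOn_Ioi_exp_neg_sq_sub_const_div (c : ℝ) :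
    IntegrableOn (fun t : ℝ => rexp (-(t - c / t) ^ 2)) (Ioi 0) := by
  refine Integrable.mono' ((integrable_exp_neg_mul_sq one_pos).const_mul (rexp (2 * c))).restrict
    (by fun_prop) ?_
  filter_upwards [ae_restrict_mem measurableSet_Ioi] with t (ht : 0 < t)
  rw [norm_of_nonneg (exp_nonneg _), ← exp_add, exp_le_exp]
  have : (t - c / t) ^ 2 = t ^ 2 - 2 * c + (c / t) ^ 2 := by field_simp [ht.ne']; ring
  nlinarith [sq_nonneg (c / t)]

-- Cauchy–Schlömilch: `t ↦ t - c / t` maps `(0, ∞)` onto `ℝ`, and the part `c / t ^ 2` of its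
-- Jacobian contributes as much as the part `1`, by the substitution `t ↦ c / t`.
lemma integral_Ioi_exp_neg_sq_sub_const_div (hc : 0 < c) :
    ∫ t in Ioi 0, rexp (-(t - c / t) ^ 2) = √π / 2 := by
  set h : ℝ → ℝ := fun t => rexp (-(t - c / t) ^ 2)
  have hinv : ∀ t ∈ Ioi (0 : ℝ), (c / t ^ 2) • h (c / t) = (c / t ^ 2) * h t := fun t _ => by
    simp only [h, smul_eq_mul, div_div_cancel₀ hc.ne', sub_sq_comm]
  have hint : IntegrableOn (fun t => (c / t ^ 2) * h t) (Ioi 0) :=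
    ((integrableOn_Ioi_div_sq_smul_comp_const_div_iff hc h).2
      (integrableOn_Ioi_exp_neg_sq_sub_const_div c)).congr_fun hinv measurableSet_Ioi
  have hsplit : √π = (∫ t in Ioi 0, h t) + ∫ t in Ioi 0, (c / t ^ 2) * h t := by
    have hgauss : ∫ u, rexp (-u ^ 2) = √π := by simpa using integral_gaussian 1
    rw [← integral_add (integrableOn_Ioi_exp_neg_sq_sub_const_div c) hint, ← hgauss,
      ← integral_Ioi_one_add_div_sq_smul_comp_sub_const_div hc]
    simp only [h, smul_eq_mul, add_mul, one_mul]
  rw [← setIntegral_congr_fun measurableSet_Ioi hinv,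
    integral_Ioi_div_sq_smul_comp_const_div hc h] at hsplit
  linarith

lemma integral_Ioi_exp_neg_sq_sub_sq_div_sq (hc : 0 ≤ c) :
    ∫ t in Ioi 0, rexp (-t ^ 2 - c ^ 2 / t ^ 2) = √π / 2 * rexp (-(2 * c)) := by
  rcases hc.eq_or_lt with rfl | hc
  · simpa using integral_gaussian_Ioi 1
  have : ∀ t ∈ Ioi (0 : ℝ),
      rexp (-t ^ 2 - c ^ 2 / t ^ 2) = rexp (-(2 * c)) * rexp (-(t - c / t) ^ 2) := fun t ht => by
    have : t ≠ 0 := ne_of_gt ht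
    rw [← exp_add]
    congr 1
    field_simp
    ring
  rw [setIntegral_congr_fun measurableSet_Ioi this, integral_const_mul,
    integral_Ioi_exp_neg_sq_sub_const_div hc, mul_comm]

lemma exp_neg_eq_integral_Ioi {r : ℝ} (hr : 0 ≤ r) :
    rexp (-r) = 2 / √π * ∫ t in Ioi 0, rexp (-t ^ 2) * rexp (-(4 * t ^ 2)⁻¹ * r ^ 2) := by
  have : ∀ t : ℝ, rexp (-t ^ 2) * rexp (-(4 * t ^ 2)⁻¹ * r ^ 2) =
      rexp (-t ^ 2 - (r / 2) ^ 2 / t ^ 2) := fun t => by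
    rw [← exp_add]; congr 1; ring
  simp_rw [this, integral_Ioi_exp_neg_sq_sub_sq_div_sq (c := r / 2) (by positivity)]
  field_simp

end Subordination

section ModulatedGaussian

variable {V : Type*} [NormedAddCommGroup V] [InnerProductSpace ℝ V]

noncomputable def modulatedGaussian (k : V) (b : ℝ) (x : V) : ℂ :=
  (rexp (-b * ‖x‖ ^ 2) : ℂ) * cexp (-(I * (inner ℝ k x : ℂ)))

lemma modulatedGaussian_eq_cexp (k : V) (b : ℝ) (x : V) :
    modulatedGaussian k b x = cexp (-(b : ℂ) * (‖x‖ : ℂ) ^ 2 + -I * (inner ℝ k x : ℂ)) := by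
  rw [modulatedGaussian, ofReal_exp, ← Complex.exp_add]
  push_cast
  ring_nf

lemma norm_modulatedGaussian (k : V) (b : ℝ) (x : V) :
    ‖modulatedGaussian k b x‖ = rexp (-b * ‖x‖ ^ 2) := by
  have : ‖cexp (-(I * (inner ℝ k x : ℂ)))‖ = 1 := by rw [Complex.norm_exp]; simp
  rw [modulatedGaussian, norm_mul, this, mul_one, Complex.norm_real, norm_of_nonneg (exp_nonneg _)]

lemma exp_neg_norm_mul_cexp_eq_integral (k x : V) :
    (rexp (-‖x‖) : ℂ) * cexp (-(I * (inner ℝ k x : ℂ))) =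
      (2 / √π : ℝ) * ∫ t in Ioi 0, (rexp (-t ^ 2) : ℂ) * modulatedGaussian k (4 * t ^ 2)⁻¹ x := by
  rw [exp_neg_eq_integral_Ioi (norm_nonneg x), Complex.ofReal_mul, mul_assoc,
    ← integral_complex_ofReal, ← integral_mul_const]
  simp only [modulatedGaussian, Complex.ofReal_mul, mul_assoc]

variable [FiniteDimensional ℝ V] [MeasurableSpace V] [BorelSpace V]

lemma integrable_modulatedGaussian {b : ℝ} (hb : 0 < b) (k : V) :
    Integrable (modulatedGaussian k b) := by
  simp_rw [funext (modulatedGaussian_eq_cexp k b)]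
  exact GaussianFourier.integrable_cexp_neg_mul_sq_norm_add (by simpa) (-I) k

lemma integral_modulatedGaussian {b : ℝ} (hb : 0 < b) (k : V) :
    ∫ x, modulatedGaussian k b x =
      ((π / b) ^ (finrank ℝ V / 2 : ℝ) * rexp (-‖k‖ ^ 2 / (4 * b)) : ℝ) := by
  simp_rw [modulatedGaussian_eq_cexp]
  rw [GaussianFourier.integral_cexp_neg_mul_sq_norm_add (by simpa) (-I) k,
    Complex.ofReal_mul, Complex.ofReal_cpow (by positivity), ofReal_exp]
  push_cast
  rw [neg_sq, Complex.I_sq]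
  ring_nf

end ModulatedGaussian

lemma pi_div_inv_four_mul_sq_rpow (n : ℕ) {t : ℝ} (ht : 0 < t) :
    (π / (4 * t ^ 2)⁻¹) ^ (n / 2 : ℝ) = (4 * π) ^ (n / 2 : ℝ) * t ^ (n : ℝ) := by
  have : π / (4 * t ^ 2)⁻¹ = 4 * π * t ^ (2 : ℝ) := by rw [rpow_two]; field_simp
  rw [this, mul_rpow (by positivity) (by positivity), ← rpow_mul ht.le]
  ring_nf

lemma integral_Ioi_rpow_mul_exp_neg_mul_sq {q b : ℝ} (hq : -1 < q) (hb : 0 < b) :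
    ∫ t in Ioi 0, t ^ q * rexp (-b * t ^ 2) = b ^ (-(q + 1) / 2) * Gamma ((q + 1) / 2) / 2 := by
  have := integral_rpow_mul_exp_neg_mul_rpow two_pos hq hb
  simp only [rpow_two] at this
  rw [this]
  ring

section ConicalKernel

variable {V : Type*} [NormedAddCommGroup V] [InnerProductSpace ℝ V] [FiniteDimensional ℝ V]
  [MeasurableSpace V] [BorelSpace V]

lemma integrable_exp_neg_sq_mul_modulatedGaussian (k : V) :
    Integrable (fun p : ℝ × V => (rexp (-p.1 ^ 2) : ℂ) * modulatedGaussian k (4 * p.1 ^ 2)⁻¹ p.2)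
      ((volume.restrict (Ioi 0)).prod volume) := by
  rw [integrable_prod_iff (by unfold modulatedGaussian; fun_prop)]
  refine ⟨?_, ?_⟩
  · filter_upwards [ae_restrict_mem measurableSet_Ioi] with t (ht : 0 < t)
    exact (integrable_modulatedGaussian (by positivity) k).const_mul _
  · refine ((integrableOn_rpow_mul_exp_neg_mul_sq one_pos (s := finrank ℝ V)
      (neg_one_lt_zero.trans_le (Nat.cast_nonneg _))).const_mul
      ((4 * π) ^ (finrank ℝ V / 2 : ℝ))).congr ?_
    filter_upwards [ae_restrict_mem measurableSet_Ioi] with t (ht : 0 < t)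
    simp only [norm_mul, Complex.norm_real, norm_of_nonneg (exp_nonneg _), norm_modulatedGaussian]
    rw [integral_const_mul, GaussianFourier.integral_rexp_neg_mul_sq_norm (by positivity),
      pi_div_inv_four_mul_sq_rpow _ ht, neg_one_mul]
    ring

lemma integral_exp_neg_sq_mul_modulatedGaussian (k : V) {t : ℝ} (ht : 0 < t) :
    ∫ x, (rexp (-t ^ 2) : ℂ) * modulatedGaussian k (4 * t ^ 2)⁻¹ x =
      ((4 * π) ^ (finrank ℝ V / 2 : ℝ) *
        (t ^ (finrank ℝ V : ℝ) * rexp (-(1 + ‖k‖ ^ 2) * t ^ 2)) : ℝ) := by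
  rw [integral_const_mul, integral_modulatedGaussian (by positivity),
    pi_div_inv_four_mul_sq_rpow _ ht, ← Complex.ofReal_mul]
  congr 1
  have : rexp (-t ^ 2) * rexp (-‖k‖ ^ 2 / (4 * (4 * t ^ 2)⁻¹)) =
      rexp (-(1 + ‖k‖ ^ 2) * t ^ 2) := by
    rw [← exp_add]; congr 1; field_simp; ring
  linear_combination (4 * π) ^ (finrank ℝ V / 2 : ℝ) * t ^ (finrank ℝ V : ℝ) * this

theorem integral_exp_neg_norm_mul_cexp_neg_inner (k : V) :
    ∫ x : V, (rexp (-‖x‖) : ℂ) * cexp (-(I * (inner ℝ k x : ℂ))) =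
      ((4 * π) ^ (finrank ℝ V / 2 : ℝ) * Gamma ((finrank ℝ V + 1) / 2) / √π *
        (1 + ‖k‖ ^ 2) ^ (-(finrank ℝ V + 1) / 2 : ℝ) : ℝ) := by
  have hn : (-1 : ℝ) < finrank ℝ V := neg_one_lt_zero.trans_le (Nat.cast_nonneg _)
  calc _ = (2 / √π : ℝ) * ∫ x : V, ∫ t in Ioi 0,
          (rexp (-t ^ 2) : ℂ) * modulatedGaussian k (4 * t ^ 2)⁻¹ x := by
        simp_rw [exp_neg_norm_mul_cexp_eq_integral k]
        exact integral_const_mul _ _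
    _ = (2 / √π : ℝ) * ∫ t in Ioi 0, ∫ x : V,
          (rexp (-t ^ 2) : ℂ) * modulatedGaussian k (4 * t ^ 2)⁻¹ x := by
        rw [← integral_integral_swap (f := fun t x => (rexp (-t ^ 2) : ℂ) *
          modulatedGaussian k (4 * t ^ 2)⁻¹ x) (integrable_exp_neg_sq_mul_modulatedGaussian k)]
    _ = (2 / √π : ℝ) * ∫ t in Ioi 0, (((4 * π) ^ (finrank ℝ V / 2 : ℝ) *
          (t ^ (finrank ℝ V : ℝ) * rexp (-(1 + ‖k‖ ^ 2) * t ^ 2)) : ℝ) : ℂ) := by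
        congr 1
        exact setIntegral_congr_fun measurableSet_Ioi fun t (ht : 0 < t) =>
          integral_exp_neg_sq_mul_modulatedGaussian k ht
    _ = _ := by
        rw [integral_complex_ofReal, integral_const_mul,
          integral_Ioi_rpow_mul_exp_neg_mul_sq hn (by positivity), ← Complex.ofReal_mul]
        congr 1
        field_simp

end ConicalKernel

/-- The two-dimensional Fourier transform of the conical kernel `e^{−‖x‖}` is
`2π (1 + ‖k‖²)^{−3/2}`; equivalently, the Green's function of the Yukawa operator
`(I − Δ)^{3/2}` in two dimensions with `α = 1` is `e^{−‖x‖}/(2π)`. -/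
theorem fourier_transform_conical_kernel (k : EuclideanSpace ℝ (Fin 2)) :
    ∫ x : EuclideanSpace ℝ (Fin 2),
        (Real.exp (-‖x‖) : ℂ) * Complex.exp (-(Complex.I * ((inner ℝ k x : ℝ) : ℂ))) =
      (2 * Real.pi : ℂ) * (((1 + ‖k‖ ^ 2) ^ (-(3 / 2 : ℝ)) : ℝ) : ℂ) := by
  have hΓ : Gamma (3 / 2) = √π / 2 := by
    rw [show (3 / 2 : ℝ) = 1 / 2 + 1 by norm_num, Gamma_add_one (by norm_num), Gamma_one_half_eq]
    ring
  have hconst : (4 * π) ^ ((2 : ℕ) / 2 : ℝ) * Gamma (((2 : ℕ) + 1) / 2) / √π = 2 * π := by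
    norm_num [hΓ]
    field_simp
    norm_num
  rw [integral_exp_neg_norm_mul_cexp_neg_inner, finrank_euclideanSpace_fin, hconst]
  norm_num
end

section
/- The N-particle system is the canonical Hamiltonian system of the discrete Hamiltonian H: fix a point (q,p) with q_i, p_i ∈ ℝⁿ and q_i ≠ q_j for all i ≠ j, and suppose G : ℝ → ℝ is an even function differentiable at every value ‖q_i − q_j‖ with i ≠ j. Then H is differentiable in (q,p) at this point, its gradient with respect to p_i equals Σ_{j=1}^N G(‖q_i − q_j‖) p_j, and its gradient with respect to q_i equals Σ_{j≠i} ⟨p_i, p_j⟩ G′(‖q_i − q_j‖) (q_i − q_j)/‖q_i − q_j‖; hence dq_i/dt = ∂H/∂p_i and dp_i/dt = −∂H/∂q_i reproduce the N-particle system of the EP equations. -/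
/-- The discrete Hamiltonian of the `N`-particle system:
`H(q,p) = (1/2) Σ_{i,j} ⟨p_i, p_j⟩ G(‖q_i − q_j‖)`. -/
noncomputable def discreteHamiltonian (n N : ℕ) (G : ℝ → ℝ)
    (q p : Fin N → EuclideanSpace ℝ (Fin n)) : ℝ :=
  (1 / 2 : ℝ) * ∑ i : Fin N, ∑ j : Fin N,
    (inner ℝ (p i) (p j) : ℝ) * G ‖q i - q j‖

/-!
`H` is a double sum of a term symmetric under swapping the two particles. Moving particle `i`
alone changes only row `i` and column `i` of that sum; by symmetry they contribute equal
gradients, which cancels the factor `1/2`. The diagonal term is `⟨p_i, p_i⟩ G(0)`: quadratic in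
`p_i`, constant in `q_i`. Off the diagonal, the chain rule through `r = ‖q_i − q_j‖ ≠ 0` gives the
factor `G′(r) (q_i − q_j) / r`.
-/

open InnerProductSpace Function
open scoped RealInnerProductSpace

section Gradient

variable {F : Type*} [NormedAddCommGroup F] [InnerProductSpace ℝ F] [CompleteSpace F]
  {f : F → ℝ} {g x : F}

theorem HasFDerivAt.hasGradientAt_of_apply_eq_inner {L : StrongDual ℝ F} (h : HasFDerivAt f L x)
    (hL : ∀ v, L v = ⟪g, v⟫) : HasGradientAt f g x := by
  rwa [hasGradientAt_iff_hasFDerivAt,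
    show toDual ℝ F g = L from ContinuousLinearMap.ext fun v => by rw [toDual_apply_apply, hL]]

theorem HasGradientAt.const_mul (h : HasGradientAt f g x) (c : ℝ) :
    HasGradientAt (fun y => c * f y) (c • g) x :=
  (h.hasFDerivAt.const_mul c).hasGradientAt_of_apply_eq_inner fun v => by
    simp [real_inner_smul_left, toDual_apply_apply]

theorem HasGradientAt.mul_const (h : HasGradientAt f g x) (c : ℝ) :
    HasGradientAt (fun y => f y * c) (c • g) x := by
  simpa only [mul_comm _ c] using h.const_mul c

theorem HasGradientAt.sum {ι : Type*} {s : Finset ι} {f : ι → F → ℝ} {g : ι → F}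
    (h : ∀ i ∈ s, HasGradientAt (f i) (g i) x) :
    HasGradientAt (fun y => ∑ i ∈ s, f i y) (∑ i ∈ s, g i) x :=
  (HasFDerivAt.fun_sum fun i hi => (h i hi).hasFDerivAt).hasGradientAt_of_apply_eq_inner
    fun v => by simp [sum_inner, toDual_apply_apply]

theorem HasDerivAt.comp_hasGradientAt (x : F) {h : ℝ → ℝ} {h' : ℝ} (hh : HasDerivAt h h' (f x))
    (hf : HasGradientAt f g x) : HasGradientAt (h ∘ f) (h' • g) x :=
  (hh.comp_hasFDerivAt x hf.hasFDerivAt).hasGradientAt_of_apply_eq_inner fun v => by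
    simp [real_inner_smul_left, toDual_apply_apply]

theorem hasGradientAt_inner_const (w x : F) : HasGradientAt (fun y => ⟪y, w⟫) w x :=
  ((innerSL ℝ w).hasFDerivAt.congr_of_eventuallyEq (.of_eq (funext fun y => real_inner_comm _ _))
    ).hasGradientAt_of_apply_eq_inner fun v => by simp

theorem hasGradientAt_norm_sq (x : F) : HasGradientAt (fun y => ‖y‖ ^ 2) ((2 : ℝ) • x) x :=
  (hasStrictFDerivAt_norm_sq x).hasFDerivAt.hasGradientAt_of_apply_eq_inner fun v => by
    simp [real_inner_smul_left]

theorem hasGradientAt_norm_sub {x c : F} (hx : x ≠ c) :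
    HasGradientAt (fun y => ‖y - c‖) (‖x - c‖⁻¹ • (x - c)) x := by
  have hsq : HasGradientAt (fun y => ‖y - c‖ ^ 2) ((2 : ℝ) • (x - c)) x :=
    (((hasFDerivAt_id x).sub_const c).norm_sq).hasGradientAt_of_apply_eq_inner fun v => by
      simp [real_inner_smul_left, inner_sub_left]
  have hpos : 0 < ‖x - c‖ ^ 2 := by positivity [sub_ne_zero.mpr hx]
  have := (Real.hasDerivAt_sqrt hpos.ne').comp_hasGradientAt x hsq
  simp only [comp_def, Real.sqrt_sq (norm_nonneg _), smul_smul] at this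
  convert this using 2
  field_simp

end Gradient

section DoubleSum

variable {ι F : Type*} [Fintype ι] [DecidableEq ι]
  [NormedAddCommGroup F] [InnerProductSpace ℝ F] [CompleteSpace F]

theorem hasGradientAt_sum_sum_update {f : ι → ι → F → F → ℝ}
    (hf : ∀ a b y z, f a b y z = f b a z y) {v : ι → F} {i : ι} {g : ι → F}
    (hoff : ∀ j ≠ i, HasGradientAt (fun x => f i j x (v j)) (g j) (v i))
    (hdiag : HasGradientAt (fun x => f i i x x) ((2 : ℝ) • g i) (v i)) :
    HasGradientAt (fun x => ∑ a, ∑ b, f a b (update v i x a) (update v i x b))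
      ((2 : ℝ) • ∑ j, g j) (v i) := by
  have hterm : ∀ a b, HasGradientAt (fun x => f a b (update v i x a) (update v i x b))
      ((if a = i then g b else 0) + (if b = i then g a else 0)) (v i) := by
    intro a b
    rcases eq_or_ne a i with rfl | ha
    · rcases eq_or_ne b a with rfl | hb
      · simpa [two_smul] using hdiag
      · simpa [update_of_ne hb, hb] using hoff b hb
    · rcases eq_or_ne b i with rfl | hb
      · simpa [update_of_ne ha, ha, hf a b] using hoff a ha
      · simpa [update_of_ne ha, update_of_ne hb, ha, hb] using hasGradientAt_const _ _
  convert HasGradientAt.sum fun a _ => HasGradientAt.sum fun b _ => hterm a b using 1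
  simp [Finset.sum_add_distrib, two_smul]

end DoubleSum

theorem differentiableAt_comp_norm_sub_apply {ι E : Type*} [Fintype ι] [NormedAddCommGroup E]
    [InnerProductSpace ℝ E] {G : ℝ → ℝ} {q : ι → E}
    (hsep : ∀ a b, a ≠ b → q a ≠ q b) (hG : ∀ a b, a ≠ b → DifferentiableAt ℝ G ‖q a - q b‖)
    (a b : ι) : DifferentiableAt ℝ (fun q' : ι → E => G ‖q' a - q' b‖) q := by
  rcases eq_or_ne a b with rfl | hab
  · simp
  · have hsub : DifferentiableAt ℝ (fun q' : ι → E => q' a - q' b) q := by fun_prop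
    exact (hG a b hab).comp q (hsub.norm ℝ (sub_ne_zero.mpr (hsep a b hab)))

theorem discreteHamiltonian_canonical_gradients_general (n N : ℕ) (G : ℝ → ℝ)
    (q p : Fin N → EuclideanSpace ℝ (Fin n))
    (hsep : ∀ i j, i ≠ j → q i ≠ q j)
    (hGdiff : ∀ i j, i ≠ j → DifferentiableAt ℝ G ‖q i - q j‖) :
    DifferentiableAt ℝ
      (fun x : (Fin N → EuclideanSpace ℝ (Fin n)) × (Fin N → EuclideanSpace ℝ (Fin n)) =>
        discreteHamiltonian n N G x.1 x.2) (q, p) ∧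
    (∀ i : Fin N,
      HasGradientAt (fun pi => discreteHamiltonian n N G q (Function.update p i pi))
        (∑ j : Fin N, G ‖q i - q j‖ • p j) (p i)) ∧
    (∀ i : Fin N,
      HasGradientAt (fun qi => discreteHamiltonian n N G (Function.update q i qi) p)
        (∑ j ∈ Finset.univ.erase i,
          ((inner ℝ (p i) (p j) : ℝ) * deriv G ‖q i - q j‖ / ‖q i - q j‖) • (q i - q j))
        (q i)) := by
  refine ⟨?_, fun i => ?_, fun i => ?_⟩
  · have hG := differentiableAt_comp_norm_sub_apply hsep hGdiff
    unfold discreteHamiltonian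
    refine (DifferentiableAt.fun_sum fun a _ => DifferentiableAt.fun_sum fun b _ => ?_).const_mul _
    exact ((differentiableAt_apply a p).comp (q, p) differentiableAt_snd |>.inner ℝ <|
      (differentiableAt_apply b p).comp (q, p) differentiableAt_snd).mul <|
      (hG a b).comp (q, p) differentiableAt_fst
  · have := (hasGradientAt_sum_sum_update (f := fun a b y z => ⟪y, z⟫ * G ‖q a - q b‖)
      (fun a b y z => by rw [real_inner_comm, norm_sub_rev]) (v := p) (i := i)
      (g := fun j => G ‖q i - q j‖ • p j)
      (fun j _ => (hasGradientAt_inner_const _ _).mul_const _) ?_).const_mul (1 / 2)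
    · simpa [discreteHamiltonian, smul_smul] using this
    · simpa [real_inner_self_eq_norm_sq, smul_smul, mul_comm] using
        (hasGradientAt_norm_sq (p i)).mul_const (G ‖q i - q i‖)
  · have := (hasGradientAt_sum_sum_update (f := fun a b y z => ⟪p a, p b⟫ * G ‖y - z‖)
      (fun a b y z => by rw [real_inner_comm, norm_sub_rev]) (v := q) (i := i)
      (g := fun j => (⟪p i, p j⟫ * deriv G ‖q i - q j‖ / ‖q i - q j‖) • (q i - q j))
      (fun j hj => ?_) ?_).const_mul (1 / 2)
    · rw [Finset.sum_erase _ (by simp)]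
      simpa [discreteHamiltonian, smul_smul] using this
    · have := ((hGdiff i j hj.symm).hasDerivAt.comp_hasGradientAt (q i)
        (hasGradientAt_norm_sub (hsep i j hj.symm))).const_mul ⟪p i, p j⟫
      simpa [smul_smul, div_eq_mul_inv, mul_assoc] using this
    · simpa using hasGradientAt_const (q i) (⟪p i, p i⟫ * G 0)

/-- The `N`-particle system is the canonical Hamiltonian system of the discrete
Hamiltonian `H`: at a configuration with distinct particles and an even kernel `G`
differentiable at the interparticle distances, `H` is differentiable, its gradient with
respect to `p_i` is `Σ_j G(‖q_i − q_j‖) p_j`, and its gradient with respect to `q_i` is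
`Σ_{j≠i} ⟨p_i,p_j⟩ G′(‖q_i − q_j‖) (q_i − q_j)/‖q_i − q_j‖`; so `dq_i/dt = ∂H/∂p_i`
and `dp_i/dt = −∂H/∂q_i` reproduce the `N`-particle system of the EP equations. -/
theorem discreteHamiltonian_canonical_gradients (n N : ℕ) (hn : 1 ≤ n) (hN : 1 ≤ N)
    (G : ℝ → ℝ) (hGeven : ∀ r : ℝ, G (-r) = G r)
    (q p : Fin N → EuclideanSpace ℝ (Fin n))
    (hsep : ∀ i j, i ≠ j → q i ≠ q j)
    (hGdiff : ∀ i j, i ≠ j → DifferentiableAt ℝ G ‖q i - q j‖) :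
    DifferentiableAt ℝ
      (fun x : (Fin N → EuclideanSpace ℝ (Fin n)) × (Fin N → EuclideanSpace ℝ (Fin n)) =>
        discreteHamiltonian n N G x.1 x.2) (q, p) ∧
    (∀ i : Fin N,
      HasGradientAt (fun pi => discreteHamiltonian n N G q (Function.update p i pi))
        (∑ j : Fin N, G ‖q i - q j‖ • p j) (p i)) ∧
    (∀ i : Fin N,
      HasGradientAt (fun qi => discreteHamiltonian n N G (Function.update q i qi) p)
        (∑ j ∈ Finset.univ.erase i,
          ((inner ℝ (p i) (p j) : ℝ) * deriv G ‖q i - q j‖ / ‖q i - q j‖) • (q i - q j))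
        (q i)) :=
  discreteHamiltonian_canonical_gradients_general n N G q p hsep hGdiff
end

section
/- The discrete Hamiltonian is conserved along solutions of the N-particle system: let G : ℝ → ℝ be an even function differentiable on (0,∞), and let q_i, p_i : ℝ → ℝⁿ (i = 1,…,N) be differentiable curves such that q_i(t) ≠ q_j(t) for all i ≠ j and all t, satisfying dq_i/dt = Σ_{j=1}^N G(‖q_i − q_j‖) p_j and dp_i/dt = −Σ_{j≠i} ⟨p_i, p_j⟩ G′(‖q_i − q_j‖)(q_i − q_j)/‖q_i − q_j‖. Then the function t ↦ H(q(t), p(t)) = (1/2) Σ_{i,j} ⟨p_i(t), p_j(t)⟩ G(‖q_i(t) − q_j(t)‖) is constant. -/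
/-!
The equations of motion are Hamilton's equations `q̇ᵢ = ∂H/∂pᵢ`, `ṗᵢ = -∂H/∂qᵢ`, so along a
solution `dH/dt = Σᵢ ⟨∂H/∂pᵢ, ṗᵢ⟩ + ⟨∂H/∂qᵢ, q̇ᵢ⟩ = 0`. Concretely, differentiating `H` termwise,
the terms coming from the momenta add up to `2 Σᵢ ⟨ṗᵢ, q̇ᵢ⟩` because `G(‖qᵢ - qⱼ‖)` is symmetric in
`i, j`, and those coming from the positions add up to `-2 Σᵢ ⟨ṗᵢ, q̇ᵢ⟩` because `qᵢ - qⱼ` is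
antisymmetric. Since particles never collide, `G` is only differentiated at positive distances.
-/

open Finset RealInnerProductSpace

section Calculus

variable {E : Type*} [NormedAddCommGroup E] [InnerProductSpace ℝ E]
  {f : ℝ → E} {f' : E} {t : ℝ}

theorem HasDerivAt.norm_of_ne_zero (hf : HasDerivAt f f' t) (h0 : f t ≠ 0) :
    HasDerivAt (fun s => ‖f s‖) (⟪f t, f'⟫ / ‖f t‖) t := by
  have hpos : 0 < ‖f t‖ := norm_pos_iff.mpr h0
  have h := hf.norm_sq.sqrt (by positivity)
  simp only [Real.sqrt_sq (norm_nonneg _)] at h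
  exact h.congr_deriv (by field_simp)

theorem hasDerivAt_comp_norm_of_ne_zero {G : ℝ → ℝ} (hG : DifferentiableAt ℝ G ‖f t‖)
    (hf : HasDerivAt f f' t) (h0 : f t ≠ 0) :
    HasDerivAt (fun s => G ‖f s‖) (deriv G ‖f t‖ / ‖f t‖ * ⟪f t, f'⟫) t :=
  (hG.hasDerivAt.comp t (hf.norm_of_ne_zero h0)).congr_deriv (by ring)

end Calculus

section Cancellation

variable {E : Type*} [NormedAddCommGroup E] [InnerProductSpace ℝ E] {ι : Type*} [Fintype ι]

theorem sum_sum_inner_add_inner_mul {g : ι → ι → ℝ} (hg : ∀ i j, g i j = g j i)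
    (p u : ι → E) :
    ∑ i, ∑ j, (⟪p i, u j⟫ + ⟪u i, p j⟫) * g i j = 2 * ∑ i, ⟪u i, ∑ j, g i j • p j⟫ := by
  have hswap : ∑ i, ∑ j, ⟪p i, u j⟫ * g i j = ∑ i, ∑ j, ⟪u i, p j⟫ * g i j := by
    rw [sum_comm]
    simp only [real_inner_comm (u _), hg]
  simp only [add_mul, sum_add_distrib, hswap, inner_sum, real_inner_smul_right, mul_comm (g _ _)]
  ring

theorem sum_sum_mul_inner_sub_sub {c : ι → ι → ℝ} (hc : ∀ i j, c i j = c j i) (x y : ι → E) :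
    ∑ i, ∑ j, c i j * ⟪x i - x j, y i - y j⟫ = 2 * ∑ i, ⟪∑ j, c i j • (x i - x j), y i⟫ := by
  have hswap : ∑ i, ∑ j, c i j * ⟪x i - x j, y j⟫ = -∑ i, ∑ j, c i j * ⟪x i - x j, y i⟫ := by
    rw [sum_comm]
    simp only [← sum_neg_distrib]
    refine sum_congr rfl fun i _ => sum_congr rfl fun j _ => ?_
    rw [hc, ← neg_sub, inner_neg_left, mul_neg]
  simp only [inner_sub_right, mul_sub, sum_sub_distrib, hswap, sum_inner, real_inner_smul_left]
  ring

/-- `dH/dt` at one instant, with `g i j = G ‖qᵢ - qⱼ‖`, `c i j = ⟨pᵢ, pⱼ⟩ G'(‖qᵢ - qⱼ‖) / ‖qᵢ - qⱼ‖`,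
`v = q̇` and `u = ṗ`. -/
theorem sum_sum_hamiltonian_rate_eq_zero {g c : ι → ι → ℝ} (hg : ∀ i j, g i j = g j i)
    (hc : ∀ i j, c i j = c j i) {x p u v : ι → E} (hv : ∀ i, v i = ∑ j, g i j • p j)
    (hu : ∀ i, u i = -∑ j, c i j • (x i - x j)) :
    ∑ i, ∑ j, ((⟪p i, u j⟫ + ⟪u i, p j⟫) * g i j + c i j * ⟪x i - x j, v i - v j⟫) = 0 := by
  rw [sum_congr rfl fun i _ => sum_add_distrib, sum_add_distrib,
    sum_sum_inner_add_inner_mul hg, sum_sum_mul_inner_sub_sub hc]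
  simp only [← hv, hu, inner_neg_left, sum_neg_distrib]
  ring

end Cancellation

section ParticleSystem

variable {E : Type*} [NormedAddCommGroup E] [InnerProductSpace ℝ E] {ι : Type*} [Fintype ι]
  [DecidableEq ι]

theorem hasDerivAt_sum_sum_inner_mul_comp_norm_sub {G : ℝ → ℝ}
    (hG : DifferentiableOn ℝ G (Set.Ioi 0)) {q p : ι → ℝ → E} {t : ℝ}
    (hsep : ∀ i j, i ≠ j → q i t ≠ q j t)
    (hq : ∀ i, HasDerivAt (q i) (∑ j, G ‖q i t - q j t‖ • p j t) t)
    (hp : ∀ i, HasDerivAt (p i)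
      (-∑ j ∈ univ.erase i,
        (⟪p i t, p j t⟫ * deriv G ‖q i t - q j t‖ / ‖q i t - q j t‖) • (q i t - q j t)) t) :
    HasDerivAt (fun s => ∑ i, ∑ j, ⟪p i s, p j s⟫ * G ‖q i s - q j s‖) 0 t := by
  set g : ι → ι → ℝ := fun i j => G ‖q i t - q j t‖
  set c : ι → ι → ℝ := fun i j => ⟪p i t, p j t⟫ * deriv G ‖q i t - q j t‖ / ‖q i t - q j t‖
  set v : ι → E := fun i => ∑ j, g i j • p j t
  set u : ι → E := fun i => -∑ j, c i j • (q i t - q j t)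
  have hp' (i : ι) : HasDerivAt (p i) (u i) t := by
    convert hp i using 1
    rw [sum_erase]
    simp only [sub_self, smul_zero]
  have hdist (i j : ι) : HasDerivAt (fun s => G ‖q i s - q j s‖)
      (deriv G ‖q i t - q j t‖ / ‖q i t - q j t‖ * ⟪q i t - q j t, v i - v j⟫) t := by
    obtain rfl | hij := eq_or_ne i j
    · simpa only [sub_self, inner_zero_left, mul_zero] using hasDerivAt_const t (G ‖(0 : E)‖)
    · have hne : q i t - q j t ≠ 0 := sub_ne_zero.mpr (hsep i j hij)
      exact hasDerivAt_comp_norm_of_ne_zero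
        (hG.differentiableAt (Ioi_mem_nhds (norm_pos_iff.mpr hne))) ((hq i).sub (hq j)) hne
  have hterm (i j : ι) : HasDerivAt (fun s => ⟪p i s, p j s⟫ * G ‖q i s - q j s‖)
      ((⟪p i t, u j⟫ + ⟪u i, p j t⟫) * g i j + c i j * ⟪q i t - q j t, v i - v j⟫) t :=
    (((hp' i).inner ℝ (hp' j)).mul (hdist i j)).congr_deriv (by simp only [g, c]; ring)
  have hrate := sum_sum_hamiltonian_rate_eq_zero (g := g) (c := c) (x := fun i => q i t)
    (p := fun i => p i t) (u := u) (v := v)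
    (fun i j => by simp only [g, norm_sub_rev])
    (fun i j => by simp only [c, norm_sub_rev, real_inner_comm]) (fun _ => rfl) (fun _ => rfl)
  rw [← hrate]
  exact HasDerivAt.fun_sum fun i _ => HasDerivAt.fun_sum fun j _ => hterm i j

end ParticleSystem

theorem discreteHamiltonian_conserved_general (n N : ℕ)
    (G : ℝ → ℝ)
    (hGdiff : DifferentiableOn ℝ G (Set.Ioi 0))
    (q p : Fin N → ℝ → EuclideanSpace ℝ (Fin n))
    (hsep : ∀ i j, i ≠ j → ∀ t : ℝ, q i t ≠ q j t)
    (hq : ∀ i t, HasDerivAt (q i) (∑ j : Fin N, G ‖q i t - q j t‖ • p j t) t)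
    (hp : ∀ i t, HasDerivAt (p i)
      (-∑ j ∈ Finset.univ.erase i,
        ((inner ℝ (p i t) (p j t) : ℝ) * deriv G ‖q i t - q j t‖ / ‖q i t - q j t‖) •
          (q i t - q j t)) t) :
    ∀ t s : ℝ,
      discreteHamiltonian n N G (fun i => q i t) (fun i => p i t) =
      discreteHamiltonian n N G (fun i => q i s) (fun i => p i s) := by
  have hH (t : ℝ) : HasDerivAt
      (fun s => discreteHamiltonian n N G (fun i => q i s) (fun i => p i s)) 0 t := by
    simpa only [discreteHamiltonian, mul_zero] using
      (hasDerivAt_sum_sum_inner_mul_comp_norm_sub hGdiff (fun i j hij => hsep i j hij t)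
        (fun i => hq i t) (fun i => hp i t)).const_mul (1 / 2 : ℝ)
  exact is_const_of_deriv_eq_zero (fun t => (hH t).differentiableAt) fun t => (hH t).deriv

/-- The discrete Hamiltonian is conserved along solutions of the `N`-particle system of
the EP equations (with an even kernel `G`, differentiable on `(0,∞)`, and particles that
never collide). -/
theorem discreteHamiltonian_conserved (n N : ℕ) (hn : 1 ≤ n) (hN : 1 ≤ N)
    (G : ℝ → ℝ) (hGeven : ∀ r : ℝ, G (-r) = G r)
    (hGdiff : DifferentiableOn ℝ G (Set.Ioi 0))
    (q p : Fin N → ℝ → EuclideanSpace ℝ (Fin n))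
    (hsep : ∀ i j, i ≠ j → ∀ t : ℝ, q i t ≠ q j t)
    (hq : ∀ i t, HasDerivAt (q i) (∑ j : Fin N, G ‖q i t - q j t‖ • p j t) t)
    (hp : ∀ i t, HasDerivAt (p i)
      (-∑ j ∈ Finset.univ.erase i,
        ((inner ℝ (p i t) (p j t) : ℝ) * deriv G ‖q i t - q j t‖ / ‖q i t - q j t‖) •
          (q i t - q j t)) t) :
    ∀ t s : ℝ,
      discreteHamiltonian n N G (fun i => q i t) (fun i => p i t) =
      discreteHamiltonian n N G (fun i => q i s) (fun i => p i s) :=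
  discreteHamiltonian_conserved_general n N G hGdiff q p hsep hq hp
end

section
/- The N-particle dynamics is equivariant under rigid motions: let G : ℝ → ℝ be a kernel, O a linear isometry of ℝⁿ and b ∈ ℝⁿ. If the differentiable curves q_i, p_i : ℝ → ℝⁿ (i = 1,…,N) solve the N-particle system of the EP equations, then the transformed curves q̃_i(t) := O q_i(t) + b and p̃_i(t) := O p_i(t) also solve the N-particle system. Consequently, matching rigidly transformed templates produces momenta and a Hamiltonian identical (via O) to those of the original matching. -/
/-! A rigid motion `x ↦ O x + b` sends each difference `q_i - q_j` to `O (q_i - q_j)`, and the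
isometry `O` preserves the norms `‖q_i - q_j‖` and inner products `⟨p_i, p_j⟩`, so both right-hand
sides of the EP system are transported by `O`; the chain rule through the linear map `O` does
the rest. -/

open Finset

section EPParticleSystem

variable {E : Type*} [NormedAddCommGroup E] [InnerProductSpace ℝ E] {ι : Type*} [Fintype ι]

def epPositionField (G : ℝ → ℝ) (q p : ι → E) (i : ι) : E :=
  ∑ j, G ‖q i - q j‖ • p j

noncomputable def epMomentumField [DecidableEq ι] (G : ℝ → ℝ) (q p : ι → E) (i : ι) : E :=
  -∑ j ∈ univ.erase i,
    (inner ℝ (p i) (p j) * deriv G ‖q i - q j‖ / ‖q i - q j‖) • (q i - q j)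

theorem rigidMotion_sub_rigidMotion (O : E →ₗᵢ[ℝ] E) (b x y : E) :
    (O x + b) - (O y + b) = O (x - y) := by
  rw [add_sub_add_right_eq_sub, map_sub]

theorem epPositionField_rigidMotion (G : ℝ → ℝ) (O : E →ₗᵢ[ℝ] E) (b : E) (q p : ι → E)
    (i : ι) :
    epPositionField G (fun j => O (q j) + b) (fun j => O (p j)) i =
      O (epPositionField G q p i) := by
  simp only [epPositionField, rigidMotion_sub_rigidMotion, O.norm_map, map_sum, map_smul]

theorem epMomentumField_rigidMotion [DecidableEq ι] (G : ℝ → ℝ) (O : E →ₗᵢ[ℝ] E) (b : E)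
    (q p : ι → E) (i : ι) :
    epMomentumField G (fun j => O (q j) + b) (fun j => O (p j)) i =
      O (epMomentumField G q p i) := by
  simp only [epMomentumField, rigidMotion_sub_rigidMotion, O.norm_map, O.inner_map_map,
    map_neg, map_sum, map_smul]

theorem HasDerivAt.linearIsometry_comp {f : ℝ → E} {f' : E} {t : ℝ} (O : E →ₗᵢ[ℝ] E)
    (hf : HasDerivAt f f' t) : HasDerivAt (fun s => O (f s)) (O f') t :=
  O.toContinuousLinearMap.hasFDerivAt.comp_hasDerivAt t hf

end EPParticleSystem

theorem nParticleSystem_rigid_equivariant_general (n N : ℕ)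
    (G : ℝ → ℝ)
    (O : EuclideanSpace ℝ (Fin n) →ₗᵢ[ℝ] EuclideanSpace ℝ (Fin n))
    (b : EuclideanSpace ℝ (Fin n))
    (q p : Fin N → ℝ → EuclideanSpace ℝ (Fin n))
    (hq : ∀ i t, HasDerivAt (q i) (∑ j : Fin N, G ‖q i t - q j t‖ • p j t) t)
    (hp : ∀ i t, HasDerivAt (p i)
      (-∑ j ∈ Finset.univ.erase i,
        ((inner ℝ (p i t) (p j t) : ℝ) * deriv G ‖q i t - q j t‖ / ‖q i t - q j t‖) •
          (q i t - q j t)) t) :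
    (∀ i t, HasDerivAt (fun s => O (q i s) + b)
      (∑ j : Fin N, G ‖(O (q i t) + b) - (O (q j t) + b)‖ • O (p j t)) t) ∧
    (∀ i t, HasDerivAt (fun s => O (p i s))
      (-∑ j ∈ Finset.univ.erase i,
        ((inner ℝ (O (p i t)) (O (p j t)) : ℝ) *
            deriv G ‖(O (q i t) + b) - (O (q j t) + b)‖ /
            ‖(O (q i t) + b) - (O (q j t) + b)‖) •
          ((O (q i t) + b) - (O (q j t) + b))) t) := by
  refine ⟨fun i t => ?_, fun i t => ?_⟩
  · exact (((hq i t).linearIsometry_comp O).add_const b).congr_deriv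
      (epPositionField_rigidMotion G O b (q · t) (p · t) i).symm
  · exact ((hp i t).linearIsometry_comp O).congr_deriv
      (epMomentumField_rigidMotion G O b (q · t) (p · t) i).symm

/-- The `N`-particle dynamics is equivariant under rigid motions: if the curves
`(q_i, p_i)` solve the `N`-particle system of the EP equations, then for any linear
isometry `O` of `ℝⁿ` and translation vector `b`, the transformed curves
`q̃_i(t) = O q_i(t) + b`, `p̃_i(t) = O p_i(t)` also solve the `N`-particle system. -/
theorem nParticleSystem_rigid_equivariant (n N : ℕ) (hn : 1 ≤ n) (hN : 1 ≤ N)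
    (G : ℝ → ℝ)
    (O : EuclideanSpace ℝ (Fin n) →ₗᵢ[ℝ] EuclideanSpace ℝ (Fin n))
    (b : EuclideanSpace ℝ (Fin n))
    (q p : Fin N → ℝ → EuclideanSpace ℝ (Fin n))
    (hq : ∀ i t, HasDerivAt (q i) (∑ j : Fin N, G ‖q i t - q j t‖ • p j t) t)
    (hp : ∀ i t, HasDerivAt (p i)
      (-∑ j ∈ Finset.univ.erase i,
        ((inner ℝ (p i t) (p j t) : ℝ) * deriv G ‖q i t - q j t‖ / ‖q i t - q j t‖) •
          (q i t - q j t)) t) :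
    (∀ i t, HasDerivAt (fun s => O (q i s) + b)
      (∑ j : Fin N, G ‖(O (q i t) + b) - (O (q j t) + b)‖ • O (p j t)) t) ∧
    (∀ i t, HasDerivAt (fun s => O (p i s))
      (-∑ j ∈ Finset.univ.erase i,
        ((inner ℝ (O (p i t)) (O (p j t)) : ℝ) *
            deriv G ‖(O (q i t) + b) - (O (q j t) + b)‖ /
            ‖(O (q i t) + b) - (O (q j t) + b)‖) •
          ((O (q i t) + b) - (O (q j t) + b))) t) :=
  nParticleSystem_rigid_equivariant_general n N G O b q p hq hp
end

section
/- (Optimal update matrix minimizes the covariance trace.) Let Σ be a symmetric positive definite real d×d matrix and C a real d×d matrix, and define f(M) := trace(M Σ Mᵀ + M C + Cᵀ Mᵀ) for real d×d matrices M. Then f(M) − f(M₀) = trace((M − M₀) Σ (M − M₀)ᵀ) ≥ 0 for all M, where M₀ := −Cᵀ Σ^{-1}; hence M₀ is a global minimizer of f. -/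
/-!
Completing the square: for symmetric invertible `S`,
`M S Mᵀ + M C + Cᵀ Mᵀ = (M + Cᵀ S⁻¹) S (M + Cᵀ S⁻¹)ᵀ - Cᵀ S⁻¹ C`.
The last term does not depend on `M`, and the square term vanishes at `M₀ = -Cᵀ S⁻¹`
and has nonnegative trace when `S` is positive definite.
-/

open Matrix

namespace Matrix

variable {m n R : Type*} [Fintype n] [DecidableEq n] [CommRing R]

theorem mul_mul_transpose_add_add_eq_sub {S : Matrix n n R} (hS : Sᵀ = S) (hdet : IsUnit S.det)
    (M : Matrix m n R) (C : Matrix n m R) :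
    M * S * Mᵀ + M * C + Cᵀ * Mᵀ
      = (M + Cᵀ * S⁻¹) * S * (M + Cᵀ * S⁻¹)ᵀ - Cᵀ * S⁻¹ * C := by
  have hSinvT : S⁻¹ᵀ = S⁻¹ := by rw [transpose_nonsing_inv, hS]
  simp only [transpose_add, transpose_mul, transpose_transpose, hSinvT, Matrix.add_mul,
    Matrix.mul_add, Matrix.mul_assoc, nonsing_inv_mul S hdet, Matrix.mul_one,
    mul_nonsing_inv_cancel_left _ _ hdet]
  abel

end Matrix

/-- Optimal update matrix minimizes the covariance trace: for `Σ` symmetric positive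
definite and `f(M) = trace(M Σ Mᵀ + M C + Cᵀ Mᵀ)`, the choice `M₀ = −Cᵀ Σ⁻¹` satisfies
`f(M) − f(M₀) = trace((M − M₀) Σ (M − M₀)ᵀ) ≥ 0` for every `M`; hence `M₀` is a global
minimizer of `f`. -/
theorem optimal_update_matrix_minimizes_trace (d : ℕ)
    (S C : Matrix (Fin d) (Fin d) ℝ) (hS : S.PosDef) :
    ∀ M : Matrix (Fin d) (Fin d) ℝ,
      (M * S * Mᵀ + M * C + Cᵀ * Mᵀ).trace - ((-(Cᵀ * S⁻¹)) * S * (-(Cᵀ * S⁻¹))ᵀ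
          + (-(Cᵀ * S⁻¹)) * C + Cᵀ * (-(Cᵀ * S⁻¹))ᵀ).trace
        = ((M - (-(Cᵀ * S⁻¹))) * S * (M - (-(Cᵀ * S⁻¹)))ᵀ).trace ∧
      0 ≤ ((M - (-(Cᵀ * S⁻¹))) * S * (M - (-(Cᵀ * S⁻¹)))ᵀ).trace ∧
      ((-(Cᵀ * S⁻¹)) * S * (-(Cᵀ * S⁻¹))ᵀ + (-(Cᵀ * S⁻¹)) * C
          + Cᵀ * (-(Cᵀ * S⁻¹))ᵀ).trace ≤ (M * S * Mᵀ + M * C + Cᵀ * Mᵀ).trace := by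
  intro M
  have complete_square := mul_mul_transpose_add_add_eq_sub (S := S) hS.isHermitian.eq
    hS.det_pos.ne'.isUnit (C := C)
  set M₀ := -(Cᵀ * S⁻¹) with hM₀
  have heq : (M * S * Mᵀ + M * C + Cᵀ * Mᵀ).trace - (M₀ * S * M₀ᵀ + M₀ * C + Cᵀ * M₀ᵀ).trace
      = ((M - M₀) * S * (M - M₀)ᵀ).trace := by
    rw [complete_square, complete_square, hM₀, neg_add_cancel, sub_neg_eq_add]
    simp [trace_sub]
  have hnonneg : 0 ≤ ((M - M₀) * S * (M - M₀)ᵀ).trace := by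
    simpa using (hS.posSemidef.mul_mul_conjTranspose_same (M - M₀)).trace_nonneg
  exact ⟨heq, hnonneg, by linarith⟩
end
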